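/- arXiv:0801.0072 — 2 statements merged into one kernel-verified Lean document; each statement's English description precedes it below -/
import Mathlib

section
/- Let U(n,k) be the number of permutations of {1,…,n} with up-down index k. Then for all integers n > m ≥ 1, U(n, 2^m) = C(n, m+1) − 1. -/
open Finset

/-- The up-down index of a permutation of `Fin n`: bit `n-2-i` is 1 iff position `i` is an ascent. -/
def updownIndex (n : ℕ) (π : Equiv.Perm (Fin n)) : ℕ :=
  ∑ i : Fin (n - 1),
    if π ⟨i.val + 1, by have := i.isLt; omega⟩ > π ⟨i.val, by have := i.isLt; omega⟩
    then 2 ^ (n - 2 - i.val) else 0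

/-- The number of permutations of `{1, ..., n}` with up-down index `k`. -/
def U (n k : ℕ) : ℕ :=
  (Finset.univ.filter (fun π : Equiv.Perm (Fin n) => updownIndex n π = k)).card

/-!
Write `n = k + 1`. The up-down index of `π` is `∑ 2 ^ (k - 1 - i)` over the ascents `i` of `π`,
so by uniqueness of binary expansions it equals `2 ^ m` exactly when `π` has a single ascent, at
position `j = k - 1 - m` (and never when `m = k`). A permutation without ascents outside `j` is
strictly decreasing on the positions `≤ j` and on the positions `> j`; hence it is determined by
the set of its first `j + 1` values, and every `(j + 1)`-subset occurs. This gives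
`C(n, j + 1) = C(n, m + 1)` such permutations, one of which, the decreasing one, has no ascent.
-/

open Equiv

section StrictAntiOnBlocks

variable {α β : Type*} [LinearOrder α]

theorem StrictAntiOn.eqOn_of_image_eq [WellFoundedGT α] [Preorder β] {s : Set α}
    {f g : α → β} (hf : StrictAntiOn f s) (hg : StrictAntiOn g s) (h : f '' s = g '' s) :
    s.EqOn f g := by
  have := (Set.strictAntiOn_iff_strictAnti.1 hf).range_inj (Set.strictAntiOn_iff_strictAnti.1 hg)
  intro x hx
  exact congrFun (this.1 (by simpa only [← Set.image_eq_range] using h)) ⟨x, hx⟩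

theorem Equiv.Perm.eq_of_strictAntiOn_of_image_eq [WellFoundedGT α] {s : Set α} {π σ : Perm α}
    (hπ : StrictAntiOn π s ∧ StrictAntiOn π sᶜ) (hσ : StrictAntiOn σ s ∧ StrictAntiOn σ sᶜ)
    (h : π '' s = σ '' s) : π = σ := by
  have hcompl : π '' sᶜ = σ '' sᶜ := by rw [π.image_compl, σ.image_compl, h]
  ext x
  by_cases hx : x ∈ s
  · rw [hπ.1.eqOn_of_image_eq hσ.1 h hx]
  · rw [hπ.2.eqOn_of_image_eq hσ.2 hcompl hx]

theorem Fintype.nonempty_orderIso_orderDual_of_card_eq {γ δ : Type*} [LinearOrder γ] [Fintype γ]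
    [LinearOrder δ] [Fintype δ] (h : Fintype.card γ = Fintype.card δ) : Nonempty (γ ≃o δᵒᵈ) :=
  ⟨(Fintype.orderIsoFinOfCardEq γ h).symm.trans
    (Fintype.orderIsoFinOfCardEq δᵒᵈ (Fintype.card_orderDual δ))⟩

variable [Fintype α] [DecidableEq α]

theorem Equiv.Perm.exists_strictAntiOn_and_compl_image_eq {A S : Finset α} (h : #S = #A) :
    ∃ π : Perm α, (StrictAntiOn π A ∧ StrictAntiOn π (↑A)ᶜ) ∧ π '' A = S := by
  obtain ⟨e⟩ := Fintype.nonempty_orderIso_orderDual_of_card_eq (γ := A) (δ := S) (by simp [h])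
  obtain ⟨f⟩ := Fintype.nonempty_orderIso_orderDual_of_card_eq (γ := {x // x ∉ A})
    (δ := {x // x ∉ S}) (by simp [Fintype.card_subtype_compl, h])
  let π : Perm α :=
    Equiv.subtypeCongr (e.toEquiv.trans OrderDual.ofDual) (f.toEquiv.trans OrderDual.ofDual)
  have hπA : ∀ x (hx : x ∈ A), π x = (e ⟨x, hx⟩).ofDual := fun x hx ↦ by
    simp [π, Equiv.subtypeCongr, sumCompl_symm_apply_of_pos, hx]
  have hπAc : ∀ x (hx : x ∉ A), π x = (f ⟨x, hx⟩).ofDual := fun x hx ↦ by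
    simp [π, Equiv.subtypeCongr, sumCompl_symm_apply_of_neg, hx]
  refine ⟨π, ⟨fun x hx y hy hxy ↦ ?_, fun x hx y hy hxy ↦ ?_⟩, ?_⟩
  · rw [hπA x hx, hπA y hy]
    exact e.strictMono (show (⟨x, hx⟩ : A) < ⟨y, hy⟩ from hxy)
  · rw [hπAc x hx, hπAc y hy]
    exact f.strictMono (show (⟨x, hx⟩ : {x // x ∉ A}) < ⟨y, hy⟩ from hxy)
  · apply subset_antisymm
    · rintro _ ⟨x, hx, rfl⟩
      rw [hπA x hx]
      exact (e ⟨x, hx⟩).ofDual.2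
    · intro y hy
      set x := e.symm (OrderDual.toDual ⟨y, hy⟩)
      refine ⟨x, x.2, ?_⟩
      rw [hπA x x.2]
      simp [x]

theorem Equiv.Perm.natCard_strictAntiOn_and_compl (A : Finset α) :
    Nat.card {π : Perm α // StrictAntiOn π A ∧ StrictAntiOn π (↑A)ᶜ} =
      (Fintype.card α).choose #A := by
  let Φ : {π : Perm α // StrictAntiOn π A ∧ StrictAntiOn π (↑A)ᶜ} → {S : Finset α // #S = #A} :=
    fun π ↦ ⟨A.map π.1.toEmbedding, card_map _⟩
  have hΦ : Φ.Bijective := by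
    refine ⟨fun π σ h ↦ Subtype.ext (π.1.eq_of_strictAntiOn_of_image_eq π.2 σ.2 ?_), fun S ↦ ?_⟩
    · simpa [Φ] using congrArg (fun S : {S : Finset α // #S = #A} ↦ (S.1 : Set α)) h
    · obtain ⟨π, hπ, himage⟩ := exists_strictAntiOn_and_compl_image_eq S.2
      exact ⟨⟨π, hπ⟩, Subtype.ext (coe_injective (by simpa [Φ] using himage))⟩
  rw [Nat.card_congr (Equiv.ofBijective Φ hΦ), Nat.card_eq_fintype_card, Fintype.card_finset_len]

end StrictAntiOnBlocks

theorem Fin.strictAntiOn_Iic_and_Ioi_iff {β : Type*} [Preorder β] {k : ℕ}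
    {f : Fin (k + 1) → β} {t : Fin (k + 1)} :
    StrictAntiOn f (Set.Iic t) ∧ StrictAntiOn f (Set.Ioi t) ↔
      ∀ i : Fin k, i.castSucc ≠ t → f i.succ < f i.castSucc := by
  constructor
  · rintro ⟨hle, hgt⟩ i hi
    rcases hi.lt_or_gt with hlt | hlt
    · exact hle hlt.le (Fin.castSucc_lt_iff_succ_le.1 hlt) Fin.castSucc_lt_succ
    · exact hgt hlt (hlt.trans Fin.castSucc_lt_succ) Fin.castSucc_lt_succ
  · intro h
    have hblock : ∀ s : Set (Fin (k + 1)), s.OrdConnected →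
        (∀ i : Fin k, i.castSucc ∈ s → i.succ ∈ s → i.castSucc ≠ t) → StrictAntiOn f s :=
      fun s hconn hs ↦ strictAntiOn_of_succ_lt hconn fun a ha has hsucc ↦ by
        obtain ⟨i, rfl⟩ := (Fin.exists_castSucc_eq (i := a)).2 (by rintro rfl; exact ha isMax_top)
        rw [Fin.orderSucc_castSucc] at hsucc ⊢
        exact h i (hs i has hsucc)
    exact ⟨hblock _ Set.ordConnected_Iic fun i _ hi ↦ (Fin.castSucc_lt_iff_succ_le.2 hi).ne,
      hblock _ Set.ordConnected_Ioi fun i hi _ ↦ hi.ne'⟩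

namespace Equiv.Perm

variable {k : ℕ}

def ascents (π : Perm (Fin (k + 1))) : Finset (Fin k) :=
  {i | π i.castSucc < π i.succ}

theorem updownIndex_eq_sum_ascents (π : Perm (Fin (k + 1))) :
    updownIndex (k + 1) π = ∑ i ∈ π.ascents, 2 ^ (i.rev : ℕ) := by
  rw [ascents, sum_filter]
  refine sum_congr rfl fun i _ ↦ ?_
  rw [Fin.val_rev, show k + 1 - 2 - i = k - (i + 1) by omega]
  rfl

theorem updownIndex_eq_two_pow_iff {π : Perm (Fin (k + 1))} {m : ℕ} :
    updownIndex (k + 1) π = 2 ^ m ↔ ∃ h : m < k, π.ascents = {Fin.rev ⟨m, h⟩} := by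
  let e : Fin k ↪ ℕ := Fin.revPerm.toEmbedding.trans Fin.valEmbedding
  have he : ∀ h : m < k, e (Fin.rev ⟨m, h⟩) = m := fun h ↦ by simp [e]
  rw [updownIndex_eq_sum_ascents, show ∑ i ∈ π.ascents, 2 ^ (i.rev : ℕ) =
    ∑ i ∈ π.ascents.map e, 2 ^ i from (sum_map π.ascents e (2 ^ ·)).symm,
    ← sum_singleton (2 ^ ·) m, (geomSum_injective le_rfl).eq_iff]
  constructor
  · intro h
    obtain ⟨i, -, hi⟩ := mem_map.1 (h ▸ mem_singleton_self m)
    have hm : m < k := hi ▸ (Fin.rev i).isLt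
    exact ⟨hm, map_injective e (by rw [h, map_singleton, he])⟩
  · rintro ⟨hm, h⟩
    rw [h, map_singleton, he]

theorem ascents_subset_iff {π : Perm (Fin (k + 1))} {s : Finset (Fin k)} :
    π.ascents ⊆ s ↔ ∀ i ∉ s, π i.succ < π i.castSucc := by
  simp only [subset_iff, ascents, mem_filter, mem_univ, true_and]
  refine forall_congr' fun i ↦ ?_
  rw [← not_imp_not, not_lt, (π.injective.ne Fin.castSucc_lt_succ.ne').le_iff_lt]

theorem natCard_strictAntiOn_Iic_and_Ioi (t : Fin (k + 1)) :
    Nat.card {π : Perm (Fin (k + 1)) // StrictAntiOn π (Set.Iic t) ∧ StrictAntiOn π (Set.Ioi t)} =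
      (k + 1).choose (t + 1) := by
  simpa [Set.compl_Iic] using natCard_strictAntiOn_and_compl (Iic t)

theorem card_ascents_subset_singleton (j : Fin k) :
    #{π : Perm (Fin (k + 1)) | π.ascents ⊆ {j}} = (k + 1).choose (j + 1) := by
  rw [← Fin.val_castSucc j, ← natCard_strictAntiOn_Iic_and_Ioi, Nat.card_eq_fintype_card,
    Fintype.card_subtype]
  simp only [ascents_subset_iff, Fin.strictAntiOn_Iic_and_Ioi_iff, mem_singleton, ne_eq,
    Fin.castSucc_inj]

theorem card_ascents_eq_empty : #{π : Perm (Fin (k + 1)) | π.ascents = ∅} = 1 := by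
  have h := natCard_strictAntiOn_Iic_and_Ioi (Fin.last k)
  rw [Fin.val_last, Nat.choose_self, Nat.card_eq_fintype_card, Fintype.card_subtype] at h
  simpa [← subset_empty, ascents_subset_iff, Fin.strictAntiOn_Iic_and_Ioi_iff,
    Fin.castSucc_ne_last] using h

theorem card_ascents_eq_singleton (j : Fin k) :
    #{π : Perm (Fin (k + 1)) | π.ascents = {j}} = (k + 1).choose (j + 1) - 1 := by
  have hdisj : _root_.Disjoint (α := Finset (Perm (Fin (k + 1)))) {π | π.ascents = {j}}
      {π | π.ascents = ∅} :=
    disjoint_filter.2 fun π _ h ↦ h ▸ singleton_ne_empty j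
  have hsplit := card_union_of_disjoint hdisj
  rw [← filter_or] at hsplit
  simp only [← subset_singleton_iff, or_comm, card_ascents_subset_singleton,
    card_ascents_eq_empty] at hsplit
  omega

end Equiv.Perm

theorem U_pow_general (n m : ℕ) (hmn : m < n) :
    U n (2 ^ m) = Nat.choose n (m + 1) - 1 := by
  obtain ⟨k, rfl⟩ : ∃ k, n = k + 1 := ⟨n - 1, by omega⟩
  simp only [U, Perm.updownIndex_eq_two_pow_iff]
  rcases (Nat.lt_succ_iff.1 hmn).lt_or_eq with hm | rfl
  · simp only [hm, exists_true_left, Perm.card_ascents_eq_singleton, Fin.val_rev]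
    rw [Nat.choose_symm_of_eq_add]
    omega
  · simp

theorem U_pow (n m : ℕ) (hm : 1 ≤ m) (hmn : m < n) :
    U n (2 ^ m) = Nat.choose n (m + 1) - 1 :=
  U_pow_general n m hmn
end

section
/- Let U(n,k) be the number of permutations of {1,…,n} with up-down index k, and let τ_k = (−1)^{s(k)} where s(k) is the binary digit sum of k. If n is prime and n > ⌊log₂(2k)⌋ (with 0 ≤ k < 2^{n-1}), then U(n,k) ≡ τ_k (mod n). -/
open Finset

/-!
Write `p = m + 1`. Reading `k < 2 ^ m` in binary, `U p k` counts the permutations whose set of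
ascents is a prescribed `S ⊆ Fin m`. The permutations whose ascents all lie in `T` correspond to
the rearrangements of the block labelling `blockIndex T` of positions (a multinomial
coefficient). Rotation by `ℤ/p` permutes these rearrangements without fixed points once
`T ≠ ∅`, so their number is `≡ [T = ∅] (mod p)`. Möbius inversion over the subsets of `S` then
gives `U p k ≡ (-1) ^ #S`, and `#S` is the binary digit sum of `k`.
-/

theorem Nat.sum_digits_two (n : ℕ) : (Nat.digits 2 n).sum = n.bitIndices.length := by
  induction n using Nat.binaryRec with
  | zero => simp
  | bit b n ih =>
    rcases n.eq_zero_or_pos with rfl | hn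
    · cases b <;> simp
    rw [Nat.digits_def' one_lt_two (by rw [Nat.bit_val]; omega), Nat.bit_div_two,
      List.sum_cons, ih]
    cases b <;> simp [Nat.bit_val, Nat.add_comm 1]

/-- `bitPos m i = m - 1 - i`: position `i` of an `(m+1)`-permutation carries the bit of weight
`2 ^ (m - 1 - i)` in its up-down index. -/
def bitPos (m : ℕ) : Fin m ↪ ℕ := Fin.revPerm.toEmbedding.trans Fin.valEmbedding

theorem exists_map_bitPos_eq {m k : ℕ} (hk : k < 2 ^ m) :
    ∃ S : Finset (Fin m), S.map (bitPos m) = k.bitIndices.toFinset := by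
  obtain ⟨S, -, hS⟩ := subset_map_iff (f := bitPos m) (t := univ).mp fun x hx => by
    have hxm : x < m := (Nat.pow_lt_pow_iff_right one_lt_two).mp
      ((Nat.two_pow_le_of_mem_bitIndices (List.mem_toFinset.mp hx)).trans_lt hk)
    exact mem_map.mpr ⟨Fin.rev ⟨x, hxm⟩, mem_univ _, by simp [bitPos]⟩
  exact ⟨S, hS.symm⟩

section tieKey

variable {n : ℕ} {α : Type*}

def tieKey (h : Fin n → α) (v : Fin n) : α ×ₗ (Fin n)ᵒᵈ :=
  toLex (h v, OrderDual.toDual v)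

theorem tieKey_injective (h : Fin n → α) : Function.Injective (tieKey h) :=
  fun _ _ e => (Prod.ext_iff.mp (toLex.injective e)).2

theorem tieKey_lt_tieKey_iff [LinearOrder α] (h : Fin n → α) (v w : Fin n) :
    tieKey h v < tieKey h w ↔ h v < h w ∨ h v = h w ∧ w < v :=
  Prod.Lex.toLex_lt_toLex

theorem strictMono_tieKey_comp_sort [LinearOrder α] (h : Fin n → α) :
    StrictMono (tieKey h ∘ Tuple.sort (tieKey h)) :=
  (Tuple.monotone_sort _).strictMono_of_injective
    ((tieKey_injective h).comp (Tuple.sort _).injective)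

end tieKey

theorem Tuple.eq_sort_of_strictMono_comp {n : ℕ} {α : Type*} [LinearOrder α] {g : Fin n → α}
    {π : Equiv.Perm (Fin n)} (hg : Function.Injective g) (hπ : StrictMono (g ∘ π)) :
    π = Tuple.sort g :=
  Equiv.ext (congrFun (hg.comp_left (Tuple.unique_monotone hπ.monotone (Tuple.monotone_sort g))))

theorem Finset.eq_of_forall_sum_powerset_eq {α M : Type*} [DecidableEq α]
    [AddCancelCommMonoid M] {f g : Finset α → M}
    (h : ∀ T : Finset α, ∑ S ∈ T.powerset, f S = ∑ S ∈ T.powerset, g S) (T : Finset α) :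
    f T = g T := by
  induction T using Finset.strongInduction with
  | H T ih =>
    have hT := h T
    rw [← add_sum_erase _ _ (mem_powerset_self T), ← add_sum_erase _ _ (mem_powerset_self T),
      sum_congr rfl fun S hS => ih S ?_] at hT
    · exact add_right_cancel hT
    obtain ⟨hne, hsub⟩ := mem_erase.mp hS
    exact (mem_powerset.mp hsub).ssubset_of_ne hne

/-- Rotations `h ↦ h ∘ (· + c)` make `ℤ/p` act on `s`, without fixed points. -/
theorem dvd_card_of_comp_add_mem {m : ℕ} {β : Type*} (hp : (m + 1).Prime)
    {s : Finset (Fin (m + 1) → β)} (hs : ∀ h ∈ s, ∀ c, h ∘ (· + c) ∈ s)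
    (hconst : ∀ h ∈ s, ∃ v, h v ≠ h 0) : m + 1 ∣ #s := by
  have := Fact.mk hp
  let _ : MulAction (Multiplicative (Fin (m + 1))) s :=
    { smul c h := ⟨h.1 ∘ (· + c.toAdd), hs _ h.2 _⟩
      one_smul h := Subtype.ext (funext fun v => congrArg h.1 (add_zero v))
      mul_smul c d h := Subtype.ext (funext fun v => congrArg h.1 (add_assoc v _ _).symm) }
  have hG : IsPGroup (m + 1) (Multiplicative (Fin (m + 1))) := IsPGroup.of_card (n := 1) (by simp)
  have : IsEmpty (MulAction.fixedPoints (Multiplicative (Fin (m + 1))) s) := ⟨fun ⟨h, hh⟩ => by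
    obtain ⟨v, hv⟩ := hconst h.1 h.2
    have hv' : h.1 (0 + v) = h.1 0 := congrFun (congrArg Subtype.val (hh (.ofAdd v))) 0
    exact hv (by rwa [zero_add] at hv')⟩
  have hmod := hG.card_modEq_card_fixedPoints s
  rwa [Nat.card_eq_finsetCard, Nat.card_of_isEmpty, Nat.modEq_zero_iff_dvd] at hmod

section Ascents

variable {m : ℕ}

def ascents (π : Equiv.Perm (Fin (m + 1))) : Finset (Fin m) :=
  {i | π i.castSucc < π i.succ}

theorem updownIndex_eq_sum_ascents (π : Equiv.Perm (Fin (m + 1))) :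
    updownIndex (m + 1) π = ∑ j ∈ (ascents π).map (bitPos m), 2 ^ j := by
  rw [sum_map, ascents, sum_filter, updownIndex]
  refine sum_congr rfl fun i _ => ?_
  simp only [bitPos, Function.Embedding.trans_apply, Equiv.coe_toEmbedding, Fin.revPerm_apply,
    Fin.valEmbedding_apply, Fin.val_rev]
  congr 2
  omega

theorem U_succ_eq_card_ascents_eq {k : ℕ} {S : Finset (Fin m)}
    (hS : S.map (bitPos m) = k.bitIndices.toFinset) :
    U (m + 1) k = #{π : Equiv.Perm (Fin (m + 1)) | ascents π = S} := by
  refine congrArg card (filter_congr fun π _ => ?_)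
  rw [updownIndex_eq_sum_ascents, ← map_inj (f := bitPos m), hS, ← equivBitIndices_symm_apply,
    ← equivBitIndices_apply]
  exact equivBitIndices.symm_apply_eq

def blockIndex (T : Finset (Fin m)) (i : Fin (m + 1)) : ℕ :=
  #{t ∈ T | t.castSucc < i}

theorem blockIndex_monotone (T : Finset (Fin m)) : Monotone (blockIndex T) :=
  fun _ _ hij => card_le_card (monotone_filter_right T fun _ _ ht => ht.trans_le hij)

theorem blockIndex_castSucc_eq_succ_iff (T : Finset (Fin m)) (i : Fin m) :
    blockIndex T i.castSucc = blockIndex T i.succ ↔ i ∉ T := by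
  constructor
  · intro h hi
    refine (card_lt_card ((ssubset_iff_of_subset ?_).mpr ⟨i, ?_, ?_⟩)).ne h
    · exact monotone_filter_right T fun _ _ ht => ht.trans i.castSucc_lt_succ
    · exact mem_filter.mpr ⟨hi, i.castSucc_lt_succ⟩
    · simp
  · intro hi
    refine congrArg card (filter_congr fun t ht => ?_)
    rw [Fin.castSucc_lt_castSucc_iff, Fin.castSucc_lt_succ_iff]
    exact ⟨le_of_lt, fun h => h.lt_of_ne (by rintro rfl; exact hi ht)⟩

theorem strictMono_tieKey_comp_iff {T : Finset (Fin m)} {σ π : Equiv.Perm (Fin (m + 1))} :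
    StrictMono (tieKey (blockIndex T ∘ σ) ∘ π) ↔
      ascents π ⊆ T ∧ blockIndex T ∘ σ ∘ π = blockIndex T := by
  constructor
  · intro hs
    have hf : blockIndex T ∘ σ ∘ π = blockIndex T := by
      simpa using Tuple.unique_monotone (σ := σ * π) (τ := 1)
        (Prod.Lex.monotone_fst_ofLex.comp hs.monotone) (by simpa using blockIndex_monotone T)
    refine ⟨fun i hi => by_contra fun hiT => ?_, hf⟩
    have hlt := hs i.castSucc_lt_succ
    simp only [Function.comp_apply, tieKey_lt_tieKey_iff] at hlt
    have hf' : ∀ v, blockIndex T (σ (π v)) = blockIndex T v := congrFun hf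
    rw [hf', hf', (blockIndex_castSucc_eq_succ_iff T i).mpr hiT] at hlt
    exact (mem_filter.mp hi).2.not_gt (hlt.resolve_left (lt_irrefl _)).2
  · rintro ⟨hasc, hf⟩
    refine Fin.strictMono_iff_lt_succ.mpr fun i => ?_
    simp only [Function.comp_apply, tieKey_lt_tieKey_iff]
    have hf' : ∀ v, blockIndex T (σ (π v)) = blockIndex T v := congrFun hf
    rw [hf', hf']
    refine (blockIndex_monotone T i.castSucc_lt_succ.le).lt_or_eq.imp_right fun heq => ⟨heq, ?_⟩
    have hi : i ∉ ascents π := fun hi => (blockIndex_castSucc_eq_succ_iff T i).mp heq (hasc hi)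
    simp only [ascents, mem_filter, mem_univ, true_and, not_lt] at hi
    exact hi.lt_of_ne (π.injective.ne i.castSucc_lt_succ.ne')

/-- Reading `π` off its block labels `blockIndex T ∘ π⁻¹` (sort by label, descending within a
block) identifies the permutations with all ascents in `T` with the rearrangements of
`blockIndex T`. -/
theorem card_ascents_subset_eq_card_image (T : Finset (Fin m)) :
    #{π : Equiv.Perm (Fin (m + 1)) | ascents π ⊆ T} =
      #(univ.image fun σ : Equiv.Perm (Fin (m + 1)) => blockIndex T ∘ σ) := by
  refine card_nbij' (fun π => blockIndex T ∘ ⇑π⁻¹) (fun h => Tuple.sort (tieKey h))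
    (fun π _ => mem_image_of_mem _ (mem_univ _)) ?_ ?_ ?_
  · rintro _ hh
    obtain ⟨σ, -, rfl⟩ := mem_image.mp hh
    exact mem_filter.mpr ⟨mem_univ _, (strictMono_tieKey_comp_iff (T := T) (σ := σ).mp
      (strictMono_tieKey_comp_sort _)).1⟩
  · intro π hπ
    refine (Tuple.eq_sort_of_strictMono_comp (tieKey_injective _)
      (strictMono_tieKey_comp_iff.mpr ⟨(mem_filter.mp hπ).2, ?_⟩)).symm
    funext v
    simp
  · rintro _ hh
    obtain ⟨σ, -, rfl⟩ := mem_image.mp hh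
    have hf := (strictMono_tieKey_comp_iff (T := T) (σ := σ).mp (strictMono_tieKey_comp_sort _)).2
    funext v
    simpa using (congrFun hf ((Tuple.sort (tieKey (blockIndex T ∘ σ)))⁻¹ v)).symm

theorem card_ascents_subset_eq_sum (T : Finset (Fin m)) :
    #{π : Equiv.Perm (Fin (m + 1)) | ascents π ⊆ T} =
      ∑ S ∈ T.powerset, #{π : Equiv.Perm (Fin (m + 1)) | ascents π = S} := by
  rw [card_eq_sum_card_fiberwise fun π hπ => mem_powerset.mpr (mem_filter.mp hπ).2]
  refine sum_congr rfl fun S hS => ?_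
  rw [filter_filter]
  refine congrArg card (filter_congr fun π _ => ?_)
  exact ⟨And.right, fun h => ⟨h ▸ mem_powerset.mp hS, h⟩⟩

theorem cast_card_ascents_subset (hp : (m + 1).Prime) (T : Finset (Fin m)) :
    (#{π : Equiv.Perm (Fin (m + 1)) | ascents π ⊆ T} : ZMod (m + 1)) =
      if T = ∅ then 1 else 0 := by
  rw [card_ascents_subset_eq_card_image]
  split_ifs with hT
  · subst hT
    simp [blockIndex, Function.comp_def, image_const univ_nonempty]
  refine (ZMod.natCast_eq_zero_iff _ _).mpr (dvd_card_of_comp_add_mem hp ?_ ?_)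
  · rintro _ hh c
    obtain ⟨σ, -, rfl⟩ := mem_image.mp hh
    exact mem_image.mpr ⟨σ * Equiv.addRight c, mem_univ _, rfl⟩
  · rintro _ hh
    obtain ⟨σ, -, rfl⟩ := mem_image.mp hh
    by_contra! hc
    obtain ⟨i, hi⟩ := nonempty_iff_ne_empty.mpr hT
    refine (blockIndex_castSucc_eq_succ_iff T i).mp ?_ hi
    simpa using (hc (σ⁻¹ i.castSucc)).trans (hc (σ⁻¹ i.succ)).symm

theorem cast_card_ascents_eq (hp : (m + 1).Prime) (S : Finset (Fin m)) :
    (#{π : Equiv.Perm (Fin (m + 1)) | ascents π = S} : ZMod (m + 1)) = (-1) ^ #S := by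
  refine Finset.eq_of_forall_sum_powerset_eq
    (f := fun S => (#{π : Equiv.Perm (Fin (m + 1)) | ascents π = S} : ZMod (m + 1)))
    (g := fun S => (-1) ^ #S) (fun T => ?_) S
  rw [← Nat.cast_sum, ← card_ascents_subset_eq_sum, cast_card_ascents_subset hp]
  simpa using congrArg (Int.cast : ℤ → ZMod (m + 1)) (sum_powerset_neg_one_pow_card (x := T)).symm

end Ascents

theorem U_thueMorse_congr_general (n k : ℕ) (hp : Nat.Prime n)
    (hk : k < 2 ^ (n - 1)) :
    (U n k : ℤ) ≡ (-1 : ℤ) ^ (Nat.digits 2 k).sum [ZMOD (n : ℤ)] := by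
  obtain ⟨m, rfl⟩ := Nat.exists_eq_add_one_of_ne_zero hp.ne_zero
  obtain ⟨S, hS⟩ := exists_map_bitPos_eq (m := m) hk
  have hsum : (Nat.digits 2 k).sum = #S := by
    rw [Nat.sum_digits_two, ← List.toFinset_card_of_nodup Nat.bitIndices_nodup, ← hS, card_map]
  rw [← ZMod.intCast_eq_intCast_iff, U_succ_eq_card_ascents_eq hS, hsum]
  push_cast
  exact cast_card_ascents_eq hp S

theorem U_thueMorse_congr (n k : ℕ) (hp : Nat.Prime n)
    (hn : Nat.log 2 (2 * k) < n) (hk : k < 2 ^ (n - 1)) :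
    (U n k : ℤ) ≡ (-1 : ℤ) ^ (Nat.digits 2 k).sum [ZMOD (n : ℤ)] :=
  U_thueMorse_congr_general n k hp hk
end
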